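/- arXiv:1708.07297 — 4 statements merged into one kernel-verified Lean document; each statement's English description precedes it below -/
import Mathlib

section
/- Let (V, g, J, ω) be a Hermitian vector space of complex dimension n, where ω(X,Y) = g(JX,Y). Identify real 2-forms with skew-symmetric endomorphisms via the metric. If ζ₀ is a real (1,1)-form with ζ₀ ≥ ω (i.e. ζ₀ - ω is a nonnegative (1,1)-form), then any real (1,1)-form ζ with ‖ζ - ζ₀‖ ≤ 1/(2√n) (norm on Λ²V*) is nondegenerate. -/
/-!
If `ζ x = 0`, then `η = ζ₀ - ζ` satisfies `η(x, Jx) = ζ₀(x, Jx) ≥ ‖x‖²`. On the other hand,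
Cauchy–Schwarz in an orthonormal basis gives `η(x, Jx)² ≤ ‖η‖²_HS ‖x‖⁴`, and by skew-symmetry the
full Hilbert–Schmidt sum `‖η‖²_HS = ∑ᵢⱼ η(bᵢ, bⱼ)²` is twice the `Λ²` norm, hence at most
`1/(2n) < 1`. So `‖x‖⁴ < ‖x‖⁴` unless `x = 0`.
-/

open scoped RealInnerProductSpace

section BilinearFrobenius

variable {ι V : Type*} [Fintype ι] [NormedAddCommGroup V] [InnerProductSpace ℝ V]

theorem OrthonormalBasis.sum_repr_sq (b : OrthonormalBasis ι ℝ V) (x : V) :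
    ∑ i, b.repr x i ^ 2 = ‖x‖ ^ 2 := by
  rw [← b.repr.norm_map x, EuclideanSpace.real_norm_sq_eq]

theorem OrthonormalBasis.bilin_apply_eq_sum (b : OrthonormalBasis ι ℝ V)
    (B : V →ₗ[ℝ] V →ₗ[ℝ] ℝ) (x y : V) :
    B x y = ∑ i, ∑ j, b.repr x i * b.repr y j * B (b i) (b j) := by
  conv_lhs => rw [← b.sum_repr x, ← b.sum_repr y]
  simp only [map_sum, LinearMap.sum_apply, map_smul, LinearMap.smul_apply, smul_eq_mul]
  rw [Finset.sum_comm]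
  refine Finset.sum_congr rfl fun j _ => ?_
  rw [Finset.mul_sum]
  exact Finset.sum_congr rfl fun i _ => by ring

theorem OrthonormalBasis.sq_bilin_apply_le (b : OrthonormalBasis ι ℝ V)
    (B : V →ₗ[ℝ] V →ₗ[ℝ] ℝ) (x y : V) :
    B x y ^ 2 ≤ (∑ i, ∑ j, B (b i) (b j) ^ 2) * (‖x‖ ^ 2 * ‖y‖ ^ 2) := by
  have key := Finset.sum_mul_sq_le_sq_mul_sq Finset.univ
    (fun p : ι × ι => b.repr x p.1 * b.repr y p.2) (fun p => B (b p.1) (b p.2))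
  simp only [Finset.univ_product_univ.symm, Finset.sum_product, mul_pow] at key
  rw [← b.sum_repr_sq x, ← b.sum_repr_sq y, Finset.sum_mul_sum, mul_comm,
    b.bilin_apply_eq_sum B x y]
  exact key

end BilinearFrobenius

theorem sum_sq_eq_two_mul_sum_sq_of_lt {ι : Type*} [Fintype ι] [LinearOrder ι]
    (M : ι → ι → ℝ) (hM : ∀ i j, M i j = -M j i) :
    ∑ i, ∑ j, M i j ^ 2 = 2 * ∑ i, ∑ j, if i < j then M i j ^ 2 else 0 := by
  have hsplit : ∀ i j, M i j ^ 2 =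
      (if i < j then M i j ^ 2 else 0) + (if j < i then M j i ^ 2 else 0) := by
    intro i j
    rcases lt_trichotomy i j with h | rfl | h
    · simp [h, h.not_gt]
    · have : M i i = 0 := by linarith [hM i i]
      simp [this]
    · simp [h, h.not_gt, hM i j]
  rw [Finset.sum_congr rfl fun i _ => Finset.sum_congr rfl fun j _ => hsplit i j]
  simp only [Finset.sum_add_distrib]
  rw [Finset.sum_comm (f := fun i j => if j < i then M j i ^ 2 else 0)]
  ring

theorem nondegenerate_of_sum_sq_sub_lt_one {ι V : Type*} [Fintype ι] [NormedAddCommGroup V]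
    [InnerProductSpace ℝ V] (b : OrthonormalBasis ι ℝ V) (J : V →ₗ[ℝ] V)
    (hJ : ∀ x, ‖J x‖ = ‖x‖) (ζ₀ ζ : V →ₗ[ℝ] V →ₗ[ℝ] ℝ) (hpos : ∀ x, ‖x‖ ^ 2 ≤ ζ₀ x (J x))
    (hclose : ∑ i, ∑ j, (ζ₀ - ζ) (b i) (b j) ^ 2 < 1) :
    ∀ x, (∀ y, ζ x y = 0) → x = 0 := by
  intro x hx
  have hlow : ‖x‖ ^ 2 ≤ (ζ₀ - ζ) x (J x) := by
    simpa [hx] using hpos x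
  have hup := b.sq_bilin_apply_le (ζ₀ - ζ) x (J x)
  rw [hJ] at hup
  have hsq : (‖x‖ ^ 2) ^ 2 ≤ (∑ i, ∑ j, (ζ₀ - ζ) (b i) (b j) ^ 2) * (‖x‖ ^ 2) ^ 2 :=
    calc (‖x‖ ^ 2) ^ 2 ≤ (ζ₀ - ζ) x (J x) ^ 2 := pow_le_pow_left₀ (by positivity) hlow 2
      _ ≤ _ := hup
      _ = _ := by ring
  by_contra hx0
  have hxpos : 0 < (‖x‖ ^ 2) ^ 2 := by positivity
  exact (le_mul_iff_one_le_left hxpos).mp hsq |>.not_gt hclose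

theorem two_mul_lt_one_of_sqrt_le {S : ℝ} (n : ℕ) (h : √S ≤ 1 / (2 * √n)) : 2 * S < 1 := by
  rw [Real.sqrt_le_iff] at h
  rcases Nat.eq_zero_or_pos n with rfl | hn
  -- for `n = 0` the hypothesis reads `√S ≤ 0`, as `1 / 0 = 0`
  · simp only [Nat.cast_zero, Real.sqrt_zero, mul_zero, div_zero] at h
    linarith [h.2]
  · have hsq : (1 / (2 * √n)) ^ 2 = 1 / (4 * n) := by
      rw [div_pow, mul_pow, Real.sq_sqrt n.cast_nonneg]
      norm_num
    have hquarter : 1 / (4 * (n : ℝ)) ≤ 1 / 4 := by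
      gcongr
      exact le_mul_of_one_le_right (by norm_num) (by exact_mod_cast hn)
    linarith [hsq ▸ h.2]

theorem one_one_form_perturbation_nondegenerate_general {V : Type*} [NormedAddCommGroup V]
    [InnerProductSpace ℝ V] (n : ℕ)
    (J : V →ₗ[ℝ] V) (hJo : ∀ x y, ⟪J x, J y⟫ = ⟪x, y⟫)
    (ζ₀ ζ : V →ₗ[ℝ] V →ₗ[ℝ] ℝ)
    (hζ₀alt : ∀ x y, ζ₀ x y = - ζ₀ y x) (hζalt : ∀ x y, ζ x y = - ζ y x)
    (hpos : ∀ x, (⟪J x, J x⟫ : ℝ) ≤ ζ₀ x (J x))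
    (b : OrthonormalBasis (Fin (2 * n)) ℝ V)
    (hnorm : Real.sqrt (∑ i, ∑ j, if i < j then (ζ (b i) (b j) - ζ₀ (b i) (b j)) ^ 2 else 0)
      ≤ 1 / (2 * Real.sqrt n)) :
    ∀ x, (∀ y, ζ x y = 0) → x = 0 := by
  refine nondegenerate_of_sum_sq_sub_lt_one b J (fun x => ?_) ζ₀ ζ (fun x => ?_) ?_
  · rw [norm_eq_sqrt_real_inner, norm_eq_sqrt_real_inner, hJo]
  · simpa only [hJo, real_inner_self_eq_norm_sq] using hpos x
  · have hskew := sum_sq_eq_two_mul_sum_sq_of_lt (fun i j => ζ (b i) (b j) - ζ₀ (b i) (b j))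
      fun i j => by rw [hζalt, hζ₀alt (b i)]; ring
    calc ∑ i, ∑ j, (ζ₀ - ζ) (b i) (b j) ^ 2
        = ∑ i, ∑ j, (ζ (b i) (b j) - ζ₀ (b i) (b j)) ^ 2 := by
          simp only [LinearMap.sub_apply, ← neg_sub (ζ _ _), neg_sq]
      _ = 2 * ∑ i, ∑ j, if i < j then (ζ (b i) (b j) - ζ₀ (b i) (b j)) ^ 2 else 0 := hskew
      _ < 1 := two_mul_lt_one_of_sqrt_le n hnorm

/-- perturbation lemma: on a Hermitian vector space `(V,g,J,ω)` of complex
dimension `n`, if `ζ₀` is a real (1,1)-form with `ζ₀ ≥ ω` and `ζ` is a real (1,1)-form with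
`‖ζ - ζ₀‖_{Λ²} ≤ 1/(2√n)`, then `ζ` is nondegenerate.  Here `ω(X,Y) = ⟪JX, Y⟫` and the norm
on 2-forms is computed in an orthonormal basis as `‖η‖² = ∑_{i<j} η(bᵢ,bⱼ)²`. -/
theorem one_one_form_perturbation_nondegenerate {V : Type*} [NormedAddCommGroup V]
    [InnerProductSpace ℝ V] [FiniteDimensional ℝ V] (n : ℕ)
    (hdim : Module.finrank ℝ V = 2 * n)
    (J : V →ₗ[ℝ] V) (hJ2 : ∀ x, J (J x) = -x) (hJo : ∀ x y, ⟪J x, J y⟫ = ⟪x, y⟫)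
    (ζ₀ ζ : V →ₗ[ℝ] V →ₗ[ℝ] ℝ)
    (hζ₀alt : ∀ x y, ζ₀ x y = - ζ₀ y x) (hζalt : ∀ x y, ζ x y = - ζ y x)
    (hζ₀11 : ∀ x y, ζ₀ (J x) (J y) = ζ₀ x y) (hζ11 : ∀ x y, ζ (J x) (J y) = ζ x y)
    (hpos : ∀ x, (⟪J x, J x⟫ : ℝ) ≤ ζ₀ x (J x))
    (b : OrthonormalBasis (Fin (2 * n)) ℝ V)
    (hnorm : Real.sqrt (∑ i, ∑ j, if i < j then (ζ (b i) (b j) - ζ₀ (b i) (b j)) ^ 2 else 0)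
      ≤ 1 / (2 * Real.sqrt n)) :
    ∀ x, (∀ y, ζ x y = 0) → x = 0 :=
  one_one_form_perturbation_nondegenerate_general n J hJo ζ₀ ζ hζ₀alt hζalt hpos b hnorm
end

section
/- Let (V, g, J) be a Hermitian vector space and W a finite-dimensional complex inner product space. If Φ ∈ Λ^{1,0}V* ⊗ Hom(W₀, W₁) is a (1,0)-form with values in linear maps between Hermitian spaces, then the End(W₀)-valued 2-form -i Φ* ∧ Φ is nonnegative; i.e., for every nonzero w ∈ W₀, the scalar 2-form X,Y ↦ ⟨(-iΦ*∧Φ)(X,Y)w, w⟩ is a nonnegative (1,1)-form, where (α∧β)(X,Y) = α(X)β(Y) - α(Y)β(X) and Φ*(X) = (Φ(X))*. -/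
open scoped RealInnerProductSpace

/-!
Pairing with `w`, the form becomes `η(X, Y) = 2 Im ⟪Φ X w, Φ Y w⟫`, twice the imaginary part of
the pull-back of the Hermitian inner product of `W₁` along the `J`-complex-linear map
`X ↦ Φ X w`. Such a form is `J`-invariant, and `(1/i) η(X', X'') = ‖Φ X w‖²`.
-/

section InnerProduct

variable {E F : Type*} [NormedAddCommGroup E] [InnerProductSpace ℂ E] [CompleteSpace E]
  [NormedAddCommGroup F] [InnerProductSpace ℂ F] [CompleteSpace F]

theorem inner_adjoint_comp_sub_adjoint_comp (A B : E →L[ℂ] F) (w : E) :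
    inner ℂ w ((A.adjoint.comp B - B.adjoint.comp A) w)
      = inner ℂ (A w) (B w) - inner ℂ (B w) (A w) := by
  simp only [sub_apply, ContinuousLinearMap.comp_apply, inner_sub_right,
    ContinuousLinearMap.adjoint_inner_right]

end InnerProduct

section Hermitian

variable {F : Type*} [NormedAddCommGroup F] [InnerProductSpace ℂ F]

theorem neg_I_mul_inner_sub_inner_swap (x y : F) :
    -Complex.I * (inner ℂ x y - inner ℂ y x) = ((2 * (inner ℂ x y).im : ℝ) : ℂ) := by
  rw [← inner_conj_symm y x, Complex.sub_conj]
  push_cast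
  linear_combination -(2 * (inner ℂ x y).im : ℂ) * Complex.I_mul_I

theorem inner_I_smul_I_smul (x y : F) :
    inner ℂ (Complex.I • x) (Complex.I • y) = inner ℂ x y := by
  rw [inner_smul_left, inner_smul_right, Complex.conj_I, ← mul_assoc, neg_mul,
    Complex.I_mul_I, neg_neg, one_mul]

theorem im_inner_I_smul_right_self (x : F) :
    (inner ℂ x (Complex.I • x)).im = ‖x‖ ^ 2 := by
  rw [inner_smul_right, Complex.I_mul_im]
  exact inner_self_eq_norm_sq (𝕜 := ℂ) x

theorem im_inner_I_smul_left_self (x : F) :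
    (inner ℂ (Complex.I • x) x).im = -‖x‖ ^ 2 := by
  rw [← inner_conj_symm, Complex.conj_im, im_inner_I_smul_right_self]

end Hermitian

theorem second_fundamental_form_wedge_nonneg_general {V : Type*} [NormedAddCommGroup V]
    [InnerProductSpace ℝ V]
    (J : V →ₗ[ℝ] V)
    {W₀ W₁ : Type*} [NormedAddCommGroup W₀] [InnerProductSpace ℂ W₀] [FiniteDimensional ℂ W₀]
    [NormedAddCommGroup W₁] [InnerProductSpace ℂ W₁] [FiniteDimensional ℂ W₁]
    (Φ : V →ₗ[ℝ] (W₀ →L[ℂ] W₁)) (hΦ : ∀ x, Φ (J x) = Complex.I • Φ x)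
    (w : W₀) (η : V → V → ℂ)
    (hη : ∀ X Y, η X Y = -Complex.I *
      (inner ℂ w ((((Φ X).adjoint.comp (Φ Y) - (Φ Y).adjoint.comp (Φ X))) w) : ℂ)) :
    (∀ X Y, η (J X) (J Y) = η X Y)
    ∧ ∀ X : V,
        0 ≤ ((Complex.I)⁻¹ * ((1 / 4 : ℂ) * (η X X + Complex.I * η X (J X)
            - Complex.I * η (J X) X + η (J X) (J X)))).re
        ∧ ((Complex.I)⁻¹ * ((1 / 4 : ℂ) * (η X X + Complex.I * η X (J X)
            - Complex.I * η (J X) X + η (J X) (J X)))).im = 0 := by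
  have hη_im : ∀ X Y, η X Y = ((2 * (inner ℂ (Φ X w) (Φ Y w)).im : ℝ) : ℂ) := fun X Y => by
    rw [hη, inner_adjoint_comp_sub_adjoint_comp, neg_I_mul_inner_sub_inner_swap]
  refine ⟨fun X Y => ?_, fun X => ?_⟩
  · simp only [hη_im, hΦ, smul_apply, inner_I_smul_I_smul]
  · have hself : (inner ℂ (Φ X w) (Φ X w)).im = 0 := inner_self_im (𝕜 := ℂ) _
    have hX : (Complex.I)⁻¹ * ((1 / 4 : ℂ) * (η X X + Complex.I * η X (J X)
        - Complex.I * η (J X) X + η (J X) (J X))) = ((‖Φ X w‖ ^ 2 : ℝ) : ℂ) := by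
      simp only [hη_im, hΦ, smul_apply, inner_I_smul_I_smul,
        im_inner_I_smul_right_self, im_inner_I_smul_left_self, hself]
      push_cast
      field_simp
      ring
    rw [hX, Complex.ofReal_re, Complex.ofReal_im]
    exact ⟨sq_nonneg _, rfl⟩

/-- if `Φ` is a `(1,0)`-form on a Hermitian vector space `(V,g,J)` with values
in `Hom(W₀,W₁)` (Hermitian spaces), then the `End(W₀)`-valued 2-form `-iΦ*∧Φ` is
nonnegative: for every nonzero `w ∈ W₀`, the scalar 2-form
`η(X,Y) = ⟨(-iΦ*∧Φ)(X,Y) w, w⟩` is of type (1,1) and satisfies `(1/i)η(X',X'') ≥ 0`, where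
`X' = (X - iJX)/2`, `X'' = (X + iJX)/2` and `η` is extended complex-bilinearly. -/
theorem second_fundamental_form_wedge_nonneg {V : Type*} [NormedAddCommGroup V]
    [InnerProductSpace ℝ V]
    (J : V →ₗ[ℝ] V) (hJ2 : ∀ x, J (J x) = -x) (hJo : ∀ x y, ⟪J x, J y⟫ = ⟪x, y⟫)
    {W₀ W₁ : Type*} [NormedAddCommGroup W₀] [InnerProductSpace ℂ W₀] [FiniteDimensional ℂ W₀]
    [NormedAddCommGroup W₁] [InnerProductSpace ℂ W₁] [FiniteDimensional ℂ W₁]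
    (Φ : V →ₗ[ℝ] (W₀ →L[ℂ] W₁)) (hΦ : ∀ x, Φ (J x) = Complex.I • Φ x)
    (w : W₀) (hw : w ≠ 0) (η : V → V → ℂ)
    (hη : ∀ X Y, η X Y = -Complex.I *
      (inner ℂ w ((((Φ X).adjoint.comp (Φ Y) - (Φ Y).adjoint.comp (Φ X))) w) : ℂ)) :
    (∀ X Y, η (J X) (J Y) = η X Y)
    ∧ ∀ X : V,
        0 ≤ ((Complex.I)⁻¹ * ((1 / 4 : ℂ) * (η X X + Complex.I * η X (J X)
            - Complex.I * η (J X) X + η (J X) (J X)))).re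
        ∧ ((Complex.I)⁻¹ * ((1 / 4 : ℂ) * (η X X + Complex.I * η X (J X)
            - Complex.I * η (J X) X + η (J X) (J X)))).im = 0 :=
  second_fundamental_form_wedge_nonneg_general J Φ hΦ w η hη
end

section
/- Let V be a Euclidean space of dimension 2n and let R be an algebraic curvature tensor on V. If ‖R - g⊘g‖_∞ ≤ 1/(2n), where g⊘g is the Kulkarni–Nomizu square of the metric ((g⊘g)(X,Y,Z,T) = g(X,Z)g(Y,T) - g(X,T)g(Y,Z)) and ‖R‖_∞ = max over unit vectors of |R(v₁,v₂,v₃,v₄)|, then for every orthogonal complex structure J on V and every X ∈ V, the holomorphic Ricci curvature Ric*_R(X,X) = ∑ᵢ R(X, eᵢ, JX, Jeᵢ) is nonnegative, where {eᵢ} is any orthonormal basis of V. -/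
/-!
Bounding `R - g⊘g` at the unit quadruple `(X, eᵢ, JX, Jeᵢ)` gives
`R(X, eᵢ, JX, Jeᵢ) ≥ ⟨JX, eᵢ⟩² - 1/(2n)` for a unit vector `X`, because `⟨X, JX⟩ = 0` and
`⟨X, Jeᵢ⟩ = -⟨JX, eᵢ⟩`. Summing over the `2n` basis vectors, Parseval turns `∑ ⟨JX, eᵢ⟩²`
into `‖JX‖² = 1`, which exactly cancels the `2n` error terms.
-/

open scoped RealInnerProductSpace

section HolomorphicRicci

variable {V : Type*} [NormedAddCommGroup V] [InnerProductSpace ℝ V]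

section OrthogonalComplexStructure

variable {J : V →ₗ[ℝ] V}

lemma inner_apply_eq_neg_inner_apply (hJ2 : ∀ x, J (J x) = -x)
    (hJo : ∀ x y, ⟪J x, J y⟫ = ⟪x, y⟫) (x y : V) : ⟪x, J y⟫ = -⟪J x, y⟫ := by
  rw [← hJo x (J y), hJ2, inner_neg_right]

lemma inner_self_apply_eq_zero (hJ2 : ∀ x, J (J x) = -x)
    (hJo : ∀ x y, ⟪J x, J y⟫ = ⟪x, y⟫) (x : V) : ⟪x, J x⟫ = 0 := by
  have h := inner_apply_eq_neg_inner_apply hJ2 hJo x x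
  rw [real_inner_comm x (J x)] at h
  linarith

end OrthogonalComplexStructure

noncomputable def starRicci {ι : Type*} [Fintype ι] (R : V →ₗ[ℝ] V →ₗ[ℝ] V →ₗ[ℝ] V →ₗ[ℝ] ℝ)
    (J : V →ₗ[ℝ] V) (b : OrthonormalBasis ι ℝ V) (X : V) : ℝ :=
  ∑ i, R X (b i) (J X) (J (b i))

section StarRicci

variable {ι : Type*} [Fintype ι] (R : V →ₗ[ℝ] V →ₗ[ℝ] V →ₗ[ℝ] V →ₗ[ℝ] ℝ) (J : V →ₗ[ℝ] V)
  (b : OrthonormalBasis ι ℝ V)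

lemma starRicci_smul (c : ℝ) (X : V) : starRicci R J b (c • X) = c ^ 2 * starRicci R J b X := by
  simp only [starRicci, map_smul, LinearMap.smul_apply, smul_eq_mul, Finset.mul_sum]
  exact Finset.sum_congr rfl fun i _ => by ring

variable {R J}

lemma inner_mul_inner_sub_le_apply {ε : ℝ}
    (hbound : ∀ v₁ v₂ v₃ v₄ : V, ‖v₁‖ = 1 → ‖v₂‖ = 1 → ‖v₃‖ = 1 → ‖v₄‖ = 1 →
      |R v₁ v₂ v₃ v₄ - (⟪v₁, v₃⟫ * ⟪v₂, v₄⟫ - ⟪v₁, v₄⟫ * ⟪v₂, v₃⟫)| ≤ ε)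
    (hJ2 : ∀ x, J (J x) = -x) (hJo : ∀ x y, ⟪J x, J y⟫ = ⟪x, y⟫)
    {u e : V} (hu : ‖u‖ = 1) (he : ‖e‖ = 1) :
    ⟪J u, e⟫ * ⟪e, J u⟫ - ε ≤ R u e (J u) (J e) := by
  have hJnorm (x : V) : ‖J x‖ = ‖x‖ := (J.isometryOfInner hJo).norm_map x
  have h := (abs_le.mp (hbound u e (J u) (J e) hu he (by rw [hJnorm, hu])
    (by rw [hJnorm, he]))).1
  rw [inner_self_apply_eq_zero hJ2 hJo, inner_apply_eq_neg_inner_apply hJ2 hJo u e] at h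
  linarith

lemma one_sub_card_mul_le_starRicci {ε : ℝ}
    (hbound : ∀ v₁ v₂ v₃ v₄ : V, ‖v₁‖ = 1 → ‖v₂‖ = 1 → ‖v₃‖ = 1 → ‖v₄‖ = 1 →
      |R v₁ v₂ v₃ v₄ - (⟪v₁, v₃⟫ * ⟪v₂, v₄⟫ - ⟪v₁, v₄⟫ * ⟪v₂, v₃⟫)| ≤ ε)
    (hJ2 : ∀ x, J (J x) = -x) (hJo : ∀ x y, ⟪J x, J y⟫ = ⟪x, y⟫)
    {u : V} (hu : ‖u‖ = 1) : 1 - Fintype.card ι * ε ≤ starRicci R J b u := by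
  have hJu : ‖J u‖ = 1 := ((J.isometryOfInner hJo).norm_map u).trans hu
  calc 1 - Fintype.card ι * ε
      = ∑ i, (⟪J u, b i⟫ * ⟪b i, J u⟫ - ε) := by
        rw [Finset.sum_sub_distrib, b.sum_inner_mul_inner, real_inner_self_eq_norm_sq, hJu,
          Finset.sum_const, Finset.card_univ, nsmul_eq_mul, one_pow]
    _ ≤ starRicci R J b u := Finset.sum_le_sum fun i _ =>
        inner_mul_inner_sub_le_apply hbound hJ2 hJo hu (b.orthonormal.1 i)

end StarRicci

end HolomorphicRicci

theorem star_ricci_nonneg_of_close_to_constant_curvature_general {V : Type*} [NormedAddCommGroup V]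
    [InnerProductSpace ℝ V] (n : ℕ)
    (R : V →ₗ[ℝ] V →ₗ[ℝ] V →ₗ[ℝ] V →ₗ[ℝ] ℝ)
    (hbound : ∀ v₁ v₂ v₃ v₄ : V, ‖v₁‖ = 1 → ‖v₂‖ = 1 → ‖v₃‖ = 1 → ‖v₄‖ = 1 →
      |R v₁ v₂ v₃ v₄ - (⟪v₁, v₃⟫ * ⟪v₂, v₄⟫ - ⟪v₁, v₄⟫ * ⟪v₂, v₃⟫)| ≤ 1 / (2 * n))
    (J : V →ₗ[ℝ] V) (hJ2 : ∀ x, J (J x) = -x) (hJo : ∀ x y, ⟪J x, J y⟫ = ⟪x, y⟫)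
    (b : OrthonormalBasis (Fin (2 * n)) ℝ V) (X : V) :
    0 ≤ ∑ i, R X (b i) (J X) (J (b i)) := by
  change 0 ≤ starRicci R J b X
  rcases Nat.eq_zero_or_pos n with rfl | hn
  · simp [starRicci]
  rcases eq_or_ne X 0 with rfl | hX
  · simp [starRicci]
  have hunit := one_sub_card_mul_le_starRicci b hbound hJ2 hJo (norm_smul_inv_norm (𝕜 := ℝ) hX)
  have hcancel : 1 - (Fintype.card (Fin (2 * n)) : ℝ) * (1 / (2 * n)) = 0 := by
    rw [Fintype.card_fin]
    field_simp
    norm_num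
  rw [← smul_inv_smul₀ (norm_ne_zero_iff.mpr hX) X, starRicci_smul]
  exact mul_nonneg (sq_nonneg _) (hcancel ▸ hunit)

/-- If an algebraic curvature tensor `R` on a `2n`-dimensional Euclidean space
satisfies `‖R - g⊘g‖_∞ ≤ 1/(2n)` (sup over unit vectors), then for every orthogonal complex
structure `J` and every `X`, the holomorphic Ricci curvature
`Ric*_R(X,X) = ∑ᵢ R(X, eᵢ, JX, Jeᵢ)` is nonnegative. -/
theorem star_ricci_nonneg_of_close_to_constant_curvature {V : Type*} [NormedAddCommGroup V]
    [InnerProductSpace ℝ V] [FiniteDimensional ℝ V] (n : ℕ)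
    (hdim : Module.finrank ℝ V = 2 * n)
    (R : V →ₗ[ℝ] V →ₗ[ℝ] V →ₗ[ℝ] V →ₗ[ℝ] ℝ)
    (hR1 : ∀ x y z t, R x y z t = - R y x z t)
    (hR3 : ∀ x y z t, R x y z t = R z t x y)
    (hBianchi : ∀ x y z t, R x y z t + R y z x t + R z x y t = 0)
    (hbound : ∀ v₁ v₂ v₃ v₄ : V, ‖v₁‖ = 1 → ‖v₂‖ = 1 → ‖v₃‖ = 1 → ‖v₄‖ = 1 →
      |R v₁ v₂ v₃ v₄ - (⟪v₁, v₃⟫ * ⟪v₂, v₄⟫ - ⟪v₁, v₄⟫ * ⟪v₂, v₃⟫)| ≤ 1 / (2 * n))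
    (J : V →ₗ[ℝ] V) (hJ2 : ∀ x, J (J x) = -x) (hJo : ∀ x y, ⟪J x, J y⟫ = ⟪x, y⟫)
    (b : OrthonormalBasis (Fin (2 * n)) ℝ V) (X : V) :
    0 ≤ ∑ i, R X (b i) (J X) (J (b i)) :=
  star_ricci_nonneg_of_close_to_constant_curvature_general n R hbound J hJ2 hJo b X
end

section
/- Let (V, g, J, ω) be a Hermitian vector space of complex dimension 3, let R̃ be a symmetric endomorphism of Λ²V* with spectrum in (5/6, 7/6) mapping (1,1)-forms to (1,1)-forms (in particular R̃(ω) is a real (1,1)-form), and let Φ ∈ Λ^{1,0}V* ⊗ ℂ^k be a vector of (1,0)-forms. Then the real 2-form R̃(ω) - iΦ*∧Φ is nondegenerate, where (Φ*∧Φ)(X,Y) = Φ(X)*Φ(Y) - Φ(Y)*Φ(X) is scalar-valued. -/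
/-!
Evaluate the form on `(x, J x)`. Since `Φ` is of type `(1,0)`, the `Φ`-term contributes
`2 ∑ |Φ(x)ⱼ|² ≥ 0`. The curvature term is the pairing of `R̃ ω` with `x♭ ∧ (J x)♭`; as `R̃ - 1`
has norm at most `1/6` on 2-forms, polarization with `|ω|² = 3` and `|x♭ ∧ (J x)♭|² = |x|⁴`
gives `R̃ ω (x, J x) ≥ 2/3 |x|²`, which is positive for `x ≠ 0`.
-/

open scoped RealInnerProductSpace ComplexConjugate

theorem Finset.sum_sum_ite_lt_add_swap_add_sum_diag {ι M : Type*} [Fintype ι] [LinearOrder ι]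
    [AddCommMonoid M] (f : ι → ι → M) :
    (∑ i, ∑ j, if i < j then f i j + f j i else 0) + ∑ i, f i i = ∑ i, ∑ j, f i j := by
  have hswap : (∑ i, ∑ j, if i < j then f j i else 0) = ∑ i, ∑ j, if j < i then f i j else 0 :=
    Finset.sum_comm
  have hsplit : ∀ i j, f i j =
      (if i < j then f i j else 0) + (if j < i then f i j else 0) +
        (if i = j then f i j else 0) := by
    intro i j
    rcases lt_trichotomy i j with h | rfl | h
    · simp [h, h.ne, h.not_gt]
    · simp
    · simp [h, h.ne', h.not_gt]
  conv_rhs => enter [2, i, 2, j]; rw [hsplit i j]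
  simp only [ite_add_zero, Finset.sum_add_distrib, hswap, Finset.sum_ite_eq]
  simp

theorem abs_apply_sub_le_of_abs_sub_le {E : Type*} [AddCommGroup E] [Module ℝ E]
    {B : LinearMap.BilinForm ℝ E} (hB : ∀ u v, B u v = B v u) {W : Submodule ℝ E}
    {T : E →ₗ[ℝ] E} (hT : ∀ u ∈ W, ∀ v ∈ W, B (T u) v = B u (T v)) {ε : ℝ}
    (hε : ∀ u ∈ W, |B (T u) u - B u u| ≤ ε * B u u) {u v : E} (hu : u ∈ W) (hv : v ∈ W) :
    |B (T u) v - B u v| ≤ ε / 2 * (B u u + B v v) := by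
  have hcross : B (T v) u = B (T u) v := by rw [hT v hv u hu, hB]
  have hadd := hε (u + v) (W.add_mem hu hv)
  have hsub := hε (u - v) (W.sub_mem hu hv)
  simp only [map_add, map_sub, LinearMap.add_apply, LinearMap.sub_apply, hcross, hB v u]
    at hadd hsub
  rw [abs_le] at hadd hsub ⊢
  constructor <;> linarith [hadd.1, hadd.2, hsub.1, hsub.2]

def skewForms (R M : Type*) [CommRing R] [AddCommGroup M] [Module R M] :
    Submodule R (M →ₗ[R] M →ₗ[R] R) where
  carrier := {ζ | ∀ x y, ζ x y = -ζ y x}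
  add_mem' {ζ η} hζ hη x y := by simp [hζ x y, hη x y, add_comm]
  zero_mem' := by simp
  smul_mem' c ζ hζ x y := by simp [hζ x y]

section Pairing

variable {ι V : Type*} [Fintype ι] [LinearOrder ι] [AddCommGroup V] [Module ℝ V]

/-- For an orthonormal basis `b`, this is the inner product of 2-forms induced by the metric. -/
def strictUpperPairing (b : ι → V) : LinearMap.BilinForm ℝ (V →ₗ[ℝ] V →ₗ[ℝ] ℝ) :=
  LinearMap.mk₂ ℝ (fun ζ η => ∑ i, ∑ j, if i < j then ζ (b i) (b j) * η (b i) (b j) else 0)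
    (by
      intros
      simp only [← Finset.sum_add_distrib]
      congr! 2
      split_ifs <;> simp [add_mul])
    (by
      intros
      simp only [LinearMap.smul_apply, smul_eq_mul, Finset.mul_sum]
      congr! 2
      split_ifs <;> simp [mul_assoc])
    (by
      intros
      simp only [← Finset.sum_add_distrib]
      congr! 2
      split_ifs <;> simp [mul_add])
    (by
      intros
      simp only [LinearMap.smul_apply, smul_eq_mul, Finset.mul_sum]
      congr! 2
      split_ifs <;> simp [mul_left_comm])

theorem strictUpperPairing_apply (b : ι → V) (ζ η : V →ₗ[ℝ] V →ₗ[ℝ] ℝ) :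
    strictUpperPairing b ζ η = ∑ i, ∑ j, if i < j then ζ (b i) (b j) * η (b i) (b j) else 0 :=
  rfl

theorem strictUpperPairing_comm (b : ι → V) (ζ η : V →ₗ[ℝ] V →ₗ[ℝ] ℝ) :
    strictUpperPairing b ζ η = strictUpperPairing b η ζ := by
  simp only [strictUpperPairing_apply, mul_comm]

theorem two_mul_strictUpperPairing_self (b : ι → V) {α : V →ₗ[ℝ] V →ₗ[ℝ] ℝ}
    (hα : α ∈ skewForms ℝ V) :
    2 * strictUpperPairing b α α = ∑ i, ∑ j, α (b i) (b j) ^ 2 := by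
  have hdiag : ∀ i, α (b i) (b i) = 0 := fun i => by linarith [hα (b i) (b i)]
  rw [← Finset.sum_sum_ite_lt_add_swap_add_sum_diag, strictUpperPairing_apply]
  simp only [hdiag, Finset.mul_sum, mul_ite, mul_zero, zero_pow two_ne_zero,
    Finset.sum_const_zero, add_zero]
  refine Finset.sum_congr rfl fun i _ => Finset.sum_congr rfl fun j _ => ?_
  rw [hα (b j) (b i)]
  split_ifs <;> ring

end Pairing

section InnerWedge

variable {ι V : Type*} [Fintype ι] [LinearOrder ι]
variable [NormedAddCommGroup V] [InnerProductSpace ℝ V]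

def innerWedge (u v : V) : V →ₗ[ℝ] V →ₗ[ℝ] ℝ :=
  LinearMap.mk₂ ℝ (fun y z => ⟪u, y⟫ * ⟪v, z⟫ - ⟪u, z⟫ * ⟪v, y⟫)
    (by intros; simp only [inner_add_right]; ring)
    (by intros; simp only [inner_smul_right, smul_eq_mul]; ring)
    (by intros; simp only [inner_add_right]; ring)
    (by intros; simp only [inner_smul_right, smul_eq_mul]; ring)

theorem innerWedge_apply (u v y z : V) :
    innerWedge u v y z = ⟪u, y⟫ * ⟪v, z⟫ - ⟪u, z⟫ * ⟪v, y⟫ :=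
  rfl

theorem innerWedge_mem_skewForms (u v : V) : innerWedge u v ∈ skewForms ℝ V := by
  intro y z
  simp only [innerWedge_apply]
  ring

theorem strictUpperPairing_innerWedge (b : OrthonormalBasis ι ℝ V)
    {α : V →ₗ[ℝ] V →ₗ[ℝ] ℝ} (hα : α ∈ skewForms ℝ V) (u v : V) :
    strictUpperPairing b α (innerWedge u v) = α u v := by
  have hexpand : α u v = ∑ i, ∑ j, α (b i) (b j) * (⟪b i, u⟫ * ⟪b j, v⟫) := by
    conv_lhs => rw [← b.sum_repr' u, ← b.sum_repr' v]
    simp only [map_sum, LinearMap.sum_apply, map_smul, LinearMap.smul_apply, smul_eq_mul,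
      Finset.mul_sum]
    rw [Finset.sum_comm]
    congr! 2 with i _ j _
    ring
  have hdiag : ∀ i, α (b i) (b i) = 0 := fun i => by linarith [hα (b i) (b i)]
  rw [hexpand, ← Finset.sum_sum_ite_lt_add_swap_add_sum_diag, strictUpperPairing_apply]
  simp only [hdiag, zero_mul, Finset.sum_const_zero, add_zero, innerWedge_apply]
  refine Finset.sum_congr rfl fun i _ => Finset.sum_congr rfl fun j _ => ?_
  rw [hα (b j) (b i), real_inner_comm u, real_inner_comm v, real_inner_comm u,
    real_inner_comm v]
  split_ifs <;> ring

theorem mem_skewForms_of_complexStructure {J : V →ₗ[ℝ] V} (hJ2 : ∀ x, J (J x) = -x)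
    (hJo : ∀ x y, ⟪J x, J y⟫ = ⟪x, y⟫) {ω : V →ₗ[ℝ] V →ₗ[ℝ] ℝ}
    (hω : ∀ x y, ω x y = ⟪J x, y⟫) :
    ω ∈ skewForms ℝ V := by
  intro x y
  rw [hω, hω, ← hJo, hJ2, inner_neg_left, real_inner_comm]

theorem two_mul_strictUpperPairing_self_of_isometry (b : OrthonormalBasis ι ℝ V)
    {ω : V →ₗ[ℝ] V →ₗ[ℝ] ℝ} (hskew : ω ∈ skewForms ℝ V) {J : V →ₗ[ℝ] V}
    (hJ : ∀ x, ‖J x‖ = ‖x‖) (hω : ∀ x y, ω x y = ⟪J x, y⟫) :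
    2 * strictUpperPairing b ω ω = Fintype.card ι := by
  simp [two_mul_strictUpperPairing_self b hskew, hω, b.sum_sq_inner_left, hJ]

theorem mul_norm_sq_le_apply_apply_complexStructure (b : OrthonormalBasis ι ℝ V)
    {J : V →ₗ[ℝ] V} (hJ2 : ∀ x, J (J x) = -x) (hJo : ∀ x y, ⟪J x, J y⟫ = ⟪x, y⟫)
    {ω : V →ₗ[ℝ] V →ₗ[ℝ] ℝ} (hω : ∀ x y, ω x y = ⟪J x, y⟫)
    {T : (V →ₗ[ℝ] V →ₗ[ℝ] ℝ) →ₗ[ℝ] (V →ₗ[ℝ] V →ₗ[ℝ] ℝ)}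
    (hTskew : ∀ ζ ∈ skewForms ℝ V, T ζ ∈ skewForms ℝ V)
    (hT : ∀ ζ ∈ skewForms ℝ V, ∀ η ∈ skewForms ℝ V,
      strictUpperPairing b (T ζ) η = strictUpperPairing b ζ (T η))
    {ε : ℝ} (hε : ∀ ζ ∈ skewForms ℝ V,
      |strictUpperPairing b (T ζ) ζ - strictUpperPairing b ζ ζ| ≤ ε * strictUpperPairing b ζ ζ)
    (x : V) :
    (1 - ε * (Fintype.card ι + 2) / 4) * ‖x‖ ^ 2 ≤ T ω x (J x) := by
  rcases eq_or_ne x 0 with rfl | hx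
  · simp
  rw [← real_inner_self_eq_norm_sq]
  have hr : 0 < ⟪x, x⟫ := real_inner_self_pos.mpr hx
  have hskew : ω ∈ skewForms ℝ V := mem_skewForms_of_complexStructure hJ2 hJo hω
  have hωω : strictUpperPairing b ω ω = Fintype.card ι / 2 := by
    rw [eq_div_iff two_ne_zero, mul_comm, two_mul_strictUpperPairing_self_of_isometry b hskew
      (J.isometryOfInner hJo).norm_map hω]
  have hxJx : ⟪x, J x⟫ = 0 := by
    rw [real_inner_comm, ← hω]
    linarith [hskew x x]
  have hξ := innerWedge_mem_skewForms x (J x)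
  -- scaling `ω` by `|x|²` balances the squared norms of the two forms being polarized
  have hpol := abs_apply_sub_le_of_abs_sub_le (E := V →ₗ[ℝ] V →ₗ[ℝ] ℝ)
    (strictUpperPairing_comm b) hT hε ((skewForms ℝ V).smul_mem ⟪x, x⟫ hskew) hξ
  simp only [map_smul, LinearMap.smul_apply, smul_eq_mul, strictUpperPairing_innerWedge b hξ,
    strictUpperPairing_innerWedge b (hTskew ω hskew), strictUpperPairing_innerWedge b hskew,
    innerWedge_apply, hω, hJo, hxJx, hωω] at hpol
  rw [abs_le] at hpol
  nlinarith [hpol.1]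

end InnerWedge

theorem Complex.re_neg_I_mul_sum_conj_mul_I_smul_sub {ι : Type*} [Fintype ι] (w : ι → ℂ) :
    (-I * ((∑ j, conj (w j) * (I • w) j) - ∑ j, conj ((I • w) j) * w j)).re =
      2 * ∑ j, normSq (w j) := by
  set S := ∑ j, normSq (w j)
  have hS : ∑ j, conj (w j) * w j = S := by
    push_cast [S]
    exact Finset.sum_congr rfl fun j _ => normSq_eq_conj_mul_self.symm
  have hleft : ∑ j, conj (w j) * (I • w) j = I * S := by
    rw [← hS, Finset.mul_sum]
    exact Finset.sum_congr rfl fun j _ => by simp only [Pi.smul_apply, smul_eq_mul]; ring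
  have hright : ∑ j, conj ((I • w) j) * w j = -I * S := by
    rw [← hS, Finset.mul_sum]
    exact Finset.sum_congr rfl fun j _ => by
      simp only [Pi.smul_apply, smul_eq_mul, map_mul, conj_I]; ring
  rw [hleft, hright, show -I * (I * S - -I * S) = 2 * S by linear_combination (-2 * S) * I_sq]
  norm_cast

theorem curvature_plus_second_fundamental_form_nondegenerate_general {V : Type*}
    [NormedAddCommGroup V] [InnerProductSpace ℝ V]
    (J : V →ₗ[ℝ] V) (hJ2 : ∀ x, J (J x) = -x) (hJo : ∀ x y, ⟪J x, J y⟫ = ⟪x, y⟫)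
    (ωf : V →ₗ[ℝ] V →ₗ[ℝ] ℝ) (hωf : ∀ x y, ωf x y = ⟪J x, y⟫)
    (b : OrthonormalBasis (Fin 6) ℝ V)
    (ip : (V →ₗ[ℝ] V →ₗ[ℝ] ℝ) → (V →ₗ[ℝ] V →ₗ[ℝ] ℝ) → ℝ)
    (hip : ∀ ζ η, ip ζ η = ∑ i, ∑ j, if i < j then ζ (b i) (b j) * η (b i) (b j) else 0)
    (Rt : (V →ₗ[ℝ] V →ₗ[ℝ] ℝ) →ₗ[ℝ] (V →ₗ[ℝ] V →ₗ[ℝ] ℝ))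
    (hRalt : ∀ ζ, (∀ x y, ζ x y = - ζ y x) → ∀ x y, Rt ζ x y = - Rt ζ y x)
    (hRsym : ∀ ζ η, (∀ x y, ζ x y = - ζ y x) → (∀ x y, η x y = - η y x) →
      ip (Rt ζ) η = ip ζ (Rt η))
    (hspec : ∀ ζ, (∀ x y, ζ x y = - ζ y x) → ζ ≠ 0 →
      (5 / 6 : ℝ) * ip ζ ζ < ip (Rt ζ) ζ ∧ ip (Rt ζ) ζ < (7 / 6 : ℝ) * ip ζ ζ)
    (k : ℕ) (Φ : V →ₗ[ℝ] (Fin k → ℂ)) (hΦ : ∀ x, Φ (J x) = Complex.I • Φ x)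
    (ζf : V → V → ℝ)
    (hζf : ∀ x y, ζf x y = Rt ωf x y +
      (-Complex.I * ((∑ j, conj (Φ x j) * Φ y j) - ∑ j, conj (Φ y j) * Φ x j)).re) :
    ∀ x, (∀ y, ζf x y = 0) → x = 0 := by
  obtain rfl : ip = fun ζ η => strictUpperPairing b ζ η := funext₂ hip
  beta_reduce at hRsym hspec
  have hε : ∀ ζ ∈ skewForms ℝ V, |strictUpperPairing b (Rt ζ) ζ - strictUpperPairing b ζ ζ| ≤
      1 / 6 * strictUpperPairing b ζ ζ := by
    intro ζ hζ
    rcases eq_or_ne ζ 0 with rfl | hζ0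
    · simp
    · obtain ⟨hlow, hhigh⟩ := hspec ζ hζ hζ0
      rw [abs_le]
      constructor <;> linarith
  intro x hx
  by_contra hx0
  have hcurv := mul_norm_sq_le_apply_apply_complexStructure b hJ2 hJo hωf (T := Rt) hRalt
    (fun ζ hζ η hη => hRsym ζ η hζ hη) hε x
  simp only [Fintype.card_fin] at hcurv
  have hsff := hx (J x)
  rw [hζf, hΦ, Complex.re_neg_I_mul_sum_conj_mul_I_smul_sub] at hsff
  have hΦx : 0 ≤ ∑ j, Complex.normSq (Φ x j) :=
    Finset.sum_nonneg fun j _ => Complex.normSq_nonneg _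
  linarith [pow_pos (norm_pos_iff.mpr hx0) 2]

/-- on a Hermitian vector space of complex dimension 3, if `R̃` is a symmetric
endomorphism of `Λ²V*` with spectrum in `(5/6, 7/6)` preserving (1,1)-forms, and `Φ` is a
vector of `(1,0)`-forms with values in `ℂ^k`, then the real 2-form `R̃(ω) - iΦ*∧Φ` is
nondegenerate, where `(Φ*∧Φ)(X,Y) = Φ(X)*Φ(Y) - Φ(Y)*Φ(X)`. -/
theorem curvature_plus_second_fundamental_form_nondegenerate {V : Type*}
    [NormedAddCommGroup V] [InnerProductSpace ℝ V] [FiniteDimensional ℝ V]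
    (hdim : Module.finrank ℝ V = 6)
    (J : V →ₗ[ℝ] V) (hJ2 : ∀ x, J (J x) = -x) (hJo : ∀ x y, ⟪J x, J y⟫ = ⟪x, y⟫)
    (ωf : V →ₗ[ℝ] V →ₗ[ℝ] ℝ) (hωf : ∀ x y, ωf x y = ⟪J x, y⟫)
    (b : OrthonormalBasis (Fin 6) ℝ V)
    (ip : (V →ₗ[ℝ] V →ₗ[ℝ] ℝ) → (V →ₗ[ℝ] V →ₗ[ℝ] ℝ) → ℝ)
    (hip : ∀ ζ η, ip ζ η = ∑ i, ∑ j, if i < j then ζ (b i) (b j) * η (b i) (b j) else 0)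
    (Rt : (V →ₗ[ℝ] V →ₗ[ℝ] ℝ) →ₗ[ℝ] (V →ₗ[ℝ] V →ₗ[ℝ] ℝ))
    (hRalt : ∀ ζ, (∀ x y, ζ x y = - ζ y x) → ∀ x y, Rt ζ x y = - Rt ζ y x)
    (hR11 : ∀ η, (∀ x y, η (J x) (J y) = η x y) → ∀ x y, Rt η (J x) (J y) = Rt η x y)
    (hRsym : ∀ ζ η, (∀ x y, ζ x y = - ζ y x) → (∀ x y, η x y = - η y x) →
      ip (Rt ζ) η = ip ζ (Rt η))
    (hspec : ∀ ζ, (∀ x y, ζ x y = - ζ y x) → ζ ≠ 0 →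
      (5 / 6 : ℝ) * ip ζ ζ < ip (Rt ζ) ζ ∧ ip (Rt ζ) ζ < (7 / 6 : ℝ) * ip ζ ζ)
    (k : ℕ) (Φ : V →ₗ[ℝ] (Fin k → ℂ)) (hΦ : ∀ x, Φ (J x) = Complex.I • Φ x)
    (ζf : V → V → ℝ)
    (hζf : ∀ x y, ζf x y = Rt ωf x y +
      (-Complex.I * ((∑ j, conj (Φ x j) * Φ y j) - ∑ j, conj (Φ y j) * Φ x j)).re) :
    ∀ x, (∀ y, ζf x y = 0) → x = 0 :=
  curvature_plus_second_fundamental_form_nondegenerate_general J hJ2 hJo ωf hωf b ip hip Rt hRalt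
    hRsym hspec k Φ hΦ ζf hζf
end
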